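/- Let W be an algebraic Weyl curvature tensor on a Euclidean vector space V of dimension n ≥ 4. If h ∈ E_W, then for every skew-symmetric endomorphism F of V: W(hF − Fh*) = W(F)h − h*W(F) and W(hF + Fh*) = W(F)h + h*W(F), where h* denotes the adjoint of h with respect to the inner product. -/
import Mathlib


/- Common setup: algebraic Weyl curvature tensors on a Euclidean vector space. -/

open scoped RealInnerProductSpace
open Finset

/-- A curvature-type 4-linear tensor on `V`. -/
abbrev Tensor4 (V : Type*) [NormedAddCommGroup V] [InnerProductSpace ℝ V] : Type _ :=
  V →ₗ[ℝ] V →ₗ[ℝ] V →ₗ[ℝ] V →ₗ[ℝ] ℝ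

variable {V : Type*} [NormedAddCommGroup V] [InnerProductSpace ℝ V] [FiniteDimensional ℝ V]

/-- `W` is an algebraic Weyl curvature tensor: it has the symmetries of a curvature
tensor, satisfies the first Bianchi identity, and is totally trace-free. -/
structure IsWeylTensor (W : Tensor4 V) : Prop where
  antisym₁ : ∀ x y z u, W x y z u = - W y x z u
  antisym₂ : ∀ x y z u, W x y z u = - W x y u z
  pair_symm : ∀ x y z u, W x y z u = W z u x y
  bianchi : ∀ x y z u, W x y z u + W y z x u + W z x y u = 0
  trace_free : ∀ (b : OrthonormalBasis (Fin (Module.finrank ℝ V)) ℝ V) (x y : V),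
      ∑ i, W x (b i) y (b i) = 0

/-- The extension of `W` to endomorphisms, `W(h) = Σᵢ W(eᵢ, ·, h eᵢ, ·)`,
viewed as a bilinear form (identified with an endomorphism via the metric). -/
noncomputable def weylExt {ι : Type*} [Fintype ι]
    (W : Tensor4 V) (b : OrthonormalBasis ι ℝ V) (h : V →ₗ[ℝ] V) (v w : V) : ℝ :=
  ∑ i, W (b i) v (h (b i)) w

/-- The space `E_W`: endomorphisms `h` with `W(x,y,hz,·) + W(y,z,hx,·) + W(z,x,hy,·) = 0`. -/
def memE (W : Tensor4 V) (h : V →ₗ[ℝ] V) : Prop :=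
  ∀ x y z u, W x y (h z) u + W y z (h x) u + W z x (h y) u = 0

/-- The Lie algebra `g_W` of the symmetry group of `W`. -/
def memG (W : Tensor4 V) (h : V →ₗ[ℝ] V) : Prop :=
  ∀ x y z u, W (h x) y z u + W x (h y) z u + W x y (h z) u + W x y z (h u) = 0

/-- Skew-symmetric endomorphisms (identified with 2-forms). -/
def IsSkew (F : V →ₗ[ℝ] V) : Prop := ∀ v w, ⟪F v, w⟫ = - ⟪v, F w⟫

/-- Symmetric endomorphisms. -/
def IsSym (F : V →ₗ[ℝ] V) : Prop := ∀ v w, ⟪F v, w⟫ = ⟪v, F w⟫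

/-- The bilinear form `g(F·,·)` associated to an endomorphism `F`. -/
noncomputable def form (F : V →ₗ[ℝ] V) (v w : V) : ℝ := ⟪F v, w⟫


section Aux

set_option linter.unusedSectionVars false

/-- Moving an endomorphism across two slots of a trace, for any function `f`
that expands linearly in each slot over the orthonormal basis. -/
lemma trace_swap_aux {ι : Type*} [Fintype ι] (b : OrthonormalBasis ι ℝ V)
    (G H : V →ₗ[ℝ] V) (hGH : ∀ v w, ⟪G v, w⟫ = ⟪v, H w⟫)
    (f : V → V → ℝ)
    (hf₁ : ∀ x y, f x y = ∑ j, ⟪x, b j⟫ * f (b j) y)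
    (hf₂ : ∀ x y, f x y = ∑ j, ⟪y, b j⟫ * f x (b j)) :
    ∑ i, f (G (b i)) (b i) = ∑ i, f (b i) (H (b i)) := by
  calc ∑ i, f (G (b i)) (b i)
      = ∑ i, ∑ j, ⟪G (b i), b j⟫ * f (b j) (b i) :=
        Finset.sum_congr rfl fun i _ => hf₁ _ _
    _ = ∑ j, ∑ i, ⟪H (b j), b i⟫ * f (b j) (b i) := by
        rw [Finset.sum_comm]
        refine Finset.sum_congr rfl fun j _ => Finset.sum_congr rfl fun i _ => ?_
        rw [hGH, real_inner_comm]
    _ = ∑ j, f (b j) (H (b j)) :=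
        Finset.sum_congr rfl fun j _ => (hf₂ _ _).symm

end Aux

/-- if `h ∈ E_W` then for every skew-symmetric `F`:
`W(hF − Fh*) = W(F)h − h*W(F)` and `W(hF + Fh*) = W(F)h + h*W(F)`. -/
theorem stmt3 (hn : 4 ≤ Module.finrank ℝ V) (W : Tensor4 V) (hW : IsWeylTensor W)
    (b : OrthonormalBasis (Fin (Module.finrank ℝ V)) ℝ V)
    (h : V →ₗ[ℝ] V) (hE : memE W h) :
    ∀ F : V →ₗ[ℝ] V, IsSkew F → ∀ v w,
      weylExt W b (h ∘ₗ F - F ∘ₗ LinearMap.adjoint h) v w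
          = weylExt W b F (h v) w - weylExt W b F v (h w) ∧
      weylExt W b (h ∘ₗ F + F ∘ₗ LinearMap.adjoint h) v w
          = weylExt W b F (h v) w + weylExt W b F v (h w) := by
  intro F hF v w
  have hskew : ∀ a c : V, ⟪F a, c⟫ = ⟪a, (-F) c⟫ := by
    intro a c; rw [hF]; simp [inner_neg_right]
  have hadj : ∀ a c : V, ⟪(LinearMap.adjoint h) a, c⟫ = ⟪a, h c⟫ := fun a c =>
    LinearMap.adjoint_inner_left h c a
  -- Bianchi trace identity: `∑ W(eᵢ, Feᵢ, x, y) = 2 ∑ W(eᵢ, x, Feᵢ, y)`.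
  have bianchiTr : ∀ x y : V,
      ∑ i, W (b i) (F (b i)) x y = 2 * ∑ i, W (b i) x (F (b i)) y := by
    intro x y
    have s1 : ∑ i, W (F (b i)) x (b i) y = ∑ i, W (b i) x ((-F) (b i)) y := by
      refine trace_swap_aux b F (-F) hskew (fun a c => W a x c y) ?_ ?_
      · intro p q; conv_lhs => rw [← b.sum_repr' p]
        simp [map_sum, LinearMap.sum_apply, map_smul, LinearMap.smul_apply, smul_eq_mul,
          real_inner_comm]
      · intro p q; conv_lhs => rw [← b.sum_repr' q]
        simp [map_sum, LinearMap.sum_apply, map_smul, LinearMap.smul_apply, smul_eq_mul,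
          real_inner_comm]
    have e1 : ∑ i, W (F (b i)) x (b i) y = - ∑ i, W (b i) x (F (b i)) y := by
      rw [s1]; simp [map_neg]
    have e2 : ∑ i, W x (b i) (F (b i)) y = - ∑ i, W (b i) x (F (b i)) y := by
      rw [← Finset.sum_neg_distrib]
      exact Finset.sum_congr rfl fun i _ => hW.antisym₁ x (b i) (F (b i)) y
    have e0 : ∑ i, W (b i) (F (b i)) x y
        = ∑ i, (- W (F (b i)) x (b i) y - W x (b i) (F (b i)) y) := by
      refine Finset.sum_congr rfl fun i _ => ?_
      have := hW.bianchi (b i) (F (b i)) x y; linarith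
    rw [Finset.sum_sub_distrib, Finset.sum_neg_distrib] at e0
    linarith
  -- Key identity A: `W(hF)(x,y) = W(F)(hx,y)`.
  have keyA : ∀ x y : V,
      ∑ i, W (b i) x (h (F (b i))) y = ∑ i, W (b i) (h x) (F (b i)) y := by
    intro x y
    have s1 : ∑ i, W x (F (b i)) (h (b i)) y = ∑ i, W x (b i) (h ((-F) (b i))) y := by
      refine trace_swap_aux b F (-F) hskew (fun a c => W x a (h c) y) ?_ ?_
      · intro p q; conv_lhs => rw [← b.sum_repr' p]
        simp [map_sum, LinearMap.sum_apply, map_smul, LinearMap.smul_apply, smul_eq_mul,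
          real_inner_comm]
      · intro p q; conv_lhs => rw [← b.sum_repr' q]
        simp [map_sum, LinearMap.sum_apply, map_smul, LinearMap.smul_apply, smul_eq_mul,
          real_inner_comm]
    have e1 : ∑ i, W x (F (b i)) (h (b i)) y = ∑ i, W (b i) x (h (F (b i))) y := by
      rw [s1]
      refine Finset.sum_congr rfl fun i _ => ?_
      have := hW.antisym₁ x (b i) (h (F (b i))) y
      simp only [LinearMap.neg_apply, map_neg]
      linarith
    have e2 : ∑ i, W (F (b i)) (b i) (h x) y = - ∑ i, W (b i) (F (b i)) (h x) y := by
      rw [← Finset.sum_neg_distrib]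
      exact Finset.sum_congr rfl fun i _ => hW.antisym₁ (F (b i)) (b i) (h x) y
    have e0 : ∑ i, W (b i) x (h (F (b i))) y
        = ∑ i, (- W x (F (b i)) (h (b i)) y - W (F (b i)) (b i) (h x) y) := by
      refine Finset.sum_congr rfl fun i _ => ?_
      have := hE (b i) x (F (b i)) y; linarith
    rw [Finset.sum_sub_distrib, Finset.sum_neg_distrib] at e0
    have := bianchiTr (h x) y
    linarith
  -- Antisymmetry of `W(F)`.
  have anti : ∀ x y : V,
      ∑ i, W (b i) x (F (b i)) y = - ∑ i, W (b i) y (F (b i)) x := by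
    intro x y
    have s1 : ∑ i, W (F (b i)) y (b i) x = ∑ i, W (b i) y ((-F) (b i)) x := by
      refine trace_swap_aux b F (-F) hskew (fun a c => W a y c x) ?_ ?_
      · intro p q; conv_lhs => rw [← b.sum_repr' p]
        simp [map_sum, LinearMap.sum_apply, map_smul, LinearMap.smul_apply, smul_eq_mul,
          real_inner_comm]
      · intro p q; conv_lhs => rw [← b.sum_repr' q]
        simp [map_sum, LinearMap.sum_apply, map_smul, LinearMap.smul_apply, smul_eq_mul,
          real_inner_comm]
    have e1 : ∑ i, W (b i) x (F (b i)) y = ∑ i, W (F (b i)) y (b i) x :=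
      Finset.sum_congr rfl fun i _ => hW.pair_symm (b i) x (F (b i)) y
    rw [e1, s1]; simp [map_neg]
  -- Key identity B: `W(F h*)(v,w) = W(F)(v,hw)`.
  have keyB : ∑ i, W (b i) v (F ((LinearMap.adjoint h) (b i))) w
      = ∑ i, W (b i) v (F (b i)) (h w) := by
    have s1 : ∑ i, W (b i) v (F ((LinearMap.adjoint h) (b i))) w
        = ∑ i, W (h (b i)) v (F (b i)) w := by
      refine trace_swap_aux b (LinearMap.adjoint h) h hadj (fun a c => W c v (F a) w) ?_ ?_
      · intro p q; conv_lhs => rw [← b.sum_repr' p]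
        simp [map_sum, LinearMap.sum_apply, map_smul, LinearMap.smul_apply, smul_eq_mul,
          real_inner_comm]
      · intro p q; conv_lhs => rw [← b.sum_repr' q]
        simp [map_sum, LinearMap.sum_apply, map_smul, LinearMap.smul_apply, smul_eq_mul,
          real_inner_comm]
    have s2 : ∑ i, W (h (b i)) v (F (b i)) w = ∑ i, W (F (b i)) w (h (b i)) v :=
      Finset.sum_congr rfl fun i _ => hW.pair_symm (h (b i)) v (F (b i)) w
    have e0 : ∑ i, W (F (b i)) w (h (b i)) v
        = ∑ i, (- W w (b i) (h (F (b i))) v - W (b i) (F (b i)) (h w) v) := by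
      refine Finset.sum_congr rfl fun i _ => ?_
      have := hE (F (b i)) w (b i) v; linarith
    have e1 : ∑ i, W w (b i) (h (F (b i))) v = - ∑ i, W (b i) w (h (F (b i))) v := by
      rw [← Finset.sum_neg_distrib]
      exact Finset.sum_congr rfl fun i _ => hW.antisym₁ w (b i) (h (F (b i))) v
    rw [Finset.sum_sub_distrib, Finset.sum_neg_distrib] at e0
    have hA := keyA w v
    have hB := bianchiTr (h w) v
    have hAnti := anti (h w) v
    rw [s1, s2]
    linarith
  have hA := keyA v w
  simp only [weylExt, LinearMap.sub_apply, LinearMap.add_apply, LinearMap.comp_apply,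
    map_sub, map_add, LinearMap.sub_apply, LinearMap.add_apply,
    Finset.sum_sub_distrib, Finset.sum_add_distrib]
  constructor <;> rw [hA, keyB]
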